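/- With the notation of the recursive semi-global success probability p_j (monotone setting: p_{j-2}(δ₁,δ₂) is non-increasing in each of δ₁, δ₂, and Δ(ε,δ) is monotone non-decreasing in ε with Δ(ε,δ) ≤ 1 and Δ(ε,1) ∈ {values ≥ 0}), let P_L = P(E < ε*(1,1)). If additionally Δ(ε,1) = 0 whenever ε < ε*(1,1) is assumed as the decoding-success dichotomy (the helper either fully succeeds, outputting 0, or one uses the trivial bound 1), then p_j(1,1) ≥ P_L²·p_{j-2}(0,0) + 2·P_L·(1-P_L)·p_{j-2}(1,0) + (1-P_L)²·p_{j-2}(1,1), where by symmetry p_{j-2}(1,0) = p_{j-2}(0,1). -/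

import Mathlib

open MeasureTheory

/-! Since `Δ(·, 1)` is monotone and vanishes below `ε*(1,1)`, it takes values in `[0, 1]`, and it
lies below the two-valued step `e ↦ if e < ε*(1,1) then 0 else 1`. As `p_{j-2}` is antitone in both
arguments, the integrand is bounded below by `p_{j-2}` evaluated at two independent steps, whose
double integral splits over the four events into the right-hand side; symmetry merges the two
mixed terms. Antitonicity also gives measurability and, with the values in `[0, 1]`, the bounds
`p_{j-2}(1,1) ≤ · ≤ p_{j-2}(0,0)` that make both integrals finite. -/

section StepFunction

variable {Ω β : Type*} [MeasurableSpace Ω] {μ : Measure Ω} [IsProbabilityMeasure μ]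
  {s : Set Ω} [DecidablePred (· ∈ s)]

theorem integrable_comp_ite (hs : MeasurableSet s) (g : β → ℝ) (u v : β) :
    Integrable (fun x => g (if x ∈ s then u else v)) μ := by
  simp_rw [apply_ite g]
  exact Integrable.piecewise hs (integrable_const (g u)).integrableOn (integrable_const (g v)).integrableOn

theorem integral_comp_ite (hs : MeasurableSet s) (g : β → ℝ) (u v : β) :
    ∫ x, g (if x ∈ s then u else v) ∂μ = μ.real s * g u + (1 - μ.real s) * g v := by
  simp_rw [apply_ite g]
  change ∫ x, s.piecewise (fun _ => g u) (fun _ => g v) x ∂μ = _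
  rw [integral_piecewise hs (integrable_const _).integrableOn (integrable_const _).integrableOn,
    setIntegral_const, setIntegral_const, probReal_compl_eq_one_sub hs, smul_eq_mul, smul_eq_mul]

theorem integral_comp_ite_le_integral {f : Ω → ℝ} (hf : Integrable f μ) (hs : MeasurableSet s)
    (g : β → ℝ) (u v : β) (h : ∀ x, g (if x ∈ s then u else v) ≤ f x) :
    μ.real s * g u + (1 - μ.real s) * g v ≤ ∫ x, f x ∂μ := by
  rw [← integral_comp_ite hs]
  exact integral_mono (integrable_comp_ite hs g u v) hf h

end StepFunction

theorem Antitone.integrable_of_norm_le {μ : Measure ℝ} [IsFiniteMeasure μ] {f : ℝ → ℝ}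
    (hf : Antitone f) {C : ℝ} (hC : ∀ x, ‖f x‖ ≤ C) : Integrable f μ :=
  .of_bound hf.measurable.aestronglyMeasurable C (ae_of_all _ hC)

theorem step_bound_le_integral_integral {μ : Measure ℝ} [IsProbabilityMeasure μ]
    {X : Type*} [Preorder X] {F : X → X → ℝ}
    (hF₁ : ∀ y, Antitone (fun x => F x y)) (hF₂ : ∀ x, Antitone (F x))
    {D : ℝ → X} (hD : Monotone D) {lo hi : X} (hlo : ∀ e, lo ≤ D e) (hhi : ∀ e, D e ≤ hi)
    {s : Set ℝ} [DecidablePred (· ∈ s)] (hs : MeasurableSet s) (hDs : ∀ e ∈ s, D e = lo) :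
    μ.real s * (μ.real s * F lo lo + (1 - μ.real s) * F lo hi) +
        (1 - μ.real s) * (μ.real s * F hi lo + (1 - μ.real s) * F hi hi) ≤
      ∫ e₁, ∫ e₂, F (D e₁) (D e₂) ∂μ ∂μ := by
  set P := μ.real s
  have hstep : ∀ e, D e ≤ if e ∈ s then lo else hi := fun e => by
    split_ifs with he
    exacts [(hDs e he).le, hhi e]
  set C := max |F hi hi| |F lo lo|
  have hbound : ∀ e₁ e₂, ‖F (D e₁) (D e₂)‖ ≤ C := fun e₁ e₂ =>
    abs_le_max_abs_abs ((hF₂ _ (hhi e₂)).trans (hF₁ _ (hhi e₁)))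
      ((hF₁ _ (hlo e₁)).trans (hF₂ _ (hlo e₂)))
  have hinner : ∀ e₁, Integrable (fun e₂ => F (D e₁) (D e₂)) μ := fun e₁ =>
    ((hF₂ _).comp_monotone hD).integrable_of_norm_le (hbound e₁)
  have houter : Integrable (fun e₁ => ∫ e₂, F (D e₁) (D e₂) ∂μ) μ := by
    refine Antitone.integrable_of_norm_le (C := C) (fun x y hxy => ?_) (fun e₁ => ?_)
    · exact integral_mono (hinner y) (hinner x) fun e₂ => hF₁ _ (hD hxy)
    · simpa using norm_integral_le_of_norm_le_const (μ := μ) (ae_of_all _ (hbound e₁))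
  refine integral_comp_ite_le_integral houter hs (fun y => P * F y lo + (1 - P) * F y hi) lo hi
    fun e₁ => integral_comp_ite_le_integral (hinner e₁) hs _ lo hi fun e₂ => ?_
  exact (hF₁ _ (hstep e₁)).trans (hF₂ _ (hstep e₂))

theorem stmt_10_general (t : ℕ) (ν : Measure ℝ) [IsProbabilityMeasure ν]
    (εstar : (Fin t → ℝ) → (Fin t → ℝ) → ℝ)
    (Δ : ℝ → (Fin t → ℝ) → (Fin t → ℝ))
    (p : ℕ → (Fin t → ℝ) → (Fin t → ℝ) → ℝ)
    (hpanti₁ : ∀ j δ₂, Antitone (fun δ₁ => p j δ₁ δ₂))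
    (hpanti₂ : ∀ j δ₁, Antitone (p j δ₁))
    (hΔmono : ∀ δ : Fin t → ℝ, Monotone (fun ε => Δ ε δ))
    (hΔle1 : ∀ ε δ, Δ ε δ ≤ 1)
    (hΔsucc : ∀ ε : ℝ, ε < εstar 1 1 → Δ ε 1 = 0)
    (hprec : ∀ j,
      p (j + 2) 1 1 = ∫ e₁, ∫ e₂, p j (Δ e₁ 1) (Δ e₂ 1) ∂ν ∂ν)
    (hsym : ∀ j, p j 1 0 = p j 0 1)
    (PL : ℝ) (hPL : PL = (ν {x : ℝ | x < εstar 1 1}).toReal)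
    (j : ℕ) :
    p (j + 2) 1 1 ≥
      PL ^ 2 * p j 0 0 + 2 * PL * (1 - PL) * p j 1 0 +
        (1 - PL) ^ 2 * p j 1 1 := by
  set a := εstar 1 1
  have hΔ0 : ∀ e, 0 ≤ Δ e 1 := fun e => by
    rcases lt_or_ge e a with he | he
    · exact (hΔsucc e he).ge
    · simpa [hΔsucc (a - 1) (sub_one_lt a)] using
        hΔmono 1 ((sub_one_lt a).le.trans he)
  have key := step_bound_le_integral_integral (μ := ν) (hpanti₁ j) (hpanti₂ j) (hΔmono 1) hΔ0
    (fun e => hΔle1 e 1) (measurableSet_Iio (a := a)) hΔsucc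
  rw [show ν.real (Set.Iio a) = PL from hPL.symm, hsym j] at key
  rw [ge_iff_le, hprec j, hsym j]
  linear_combination key

/-- Proposition 1, inequality (38): with `p j` non-increasing
in each incoming erasure-rate vector, `Δ` monotone in the channel parameter,
`Δ ε δ ≤ 1`, and the success dichotomy `Δ ε 1 = 0` whenever `ε < εstar 1 1`,
the balanced semi-global success probability satisfies
`p (j+2) 1 1 ≥ P_L²·p j 0 0 + 2·P_L·(1-P_L)·p j 1 0 + (1-P_L)²·p j 1 1`
where `P_L = P(E < εstar 1 1)` and, by symmetry, `p j 1 0 = p j 0 1`. -/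
theorem stmt_10 (t : ℕ) (ν : Measure ℝ) [IsProbabilityMeasure ν]
    (εstar : (Fin t → ℝ) → (Fin t → ℝ) → ℝ)
    (Δ : ℝ → (Fin t → ℝ) → (Fin t → ℝ))
    (p : ℕ → (Fin t → ℝ) → (Fin t → ℝ) → ℝ)
    (hpanti₁ : ∀ j δ₂, Antitone (fun δ₁ => p j δ₁ δ₂))
    (hpanti₂ : ∀ j δ₁, Antitone (p j δ₁))
    (hΔmono : ∀ δ : Fin t → ℝ, Monotone (fun ε => Δ ε δ))
    (hΔle1 : ∀ ε δ, Δ ε δ ≤ 1)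
    (hΔsucc : ∀ ε : ℝ, ε < εstar 1 1 → Δ ε 1 = 0)
    (hprec : ∀ j,
      p (j + 2) 1 1 = ∫ e₁, ∫ e₂, p j (Δ e₁ 1) (Δ e₂ 1) ∂ν ∂ν)
    (hsym : ∀ j, p j 1 0 = p j 0 1)
    (PL : ℝ) (hPL : PL = (ν {x : ℝ | x < εstar 1 1}).toReal)
    (j : ℕ) (hj : Even j) :
    p (j + 2) 1 1 ≥
      PL ^ 2 * p j 0 0 + 2 * PL * (1 - PL) * p j 1 0 +
        (1 - PL) ^ 2 * p j 1 1 :=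
  stmt_10_general t ν εstar Δ p hpanti₁ hpanti₂ hΔmono hΔle1 hΔsucc hprec hsym PL hPL j
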